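/- arXiv:2206.10174 — 3 statements merged into one kernel-verified Lean document; each statement's English description precedes it below -/
import Mathlib

section
/- Suppose all weights are equal to 1 (W_{kl} = 1 for all l > k) and γ, μ > 0. Fix (i,j) and a vector Θ⋆_ij ∈ ℝ^K with at least one nonzero entry. Then for every row index r of B of the form r = π(k,l) with l > k and Θ⋆_{k;ij} = Θ⋆_{l;ij} (so r ∈ S_B^c corresponds to a zero difference), we have B_{r:} B_{S_B:}^† sign((BΘ⋆_ij)_{S_B}) = 0, where B_{r:} is the r-th row of B and † denotes the Moore–Penrose pseudoinverse. -/
open scoped Classical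
open Matrix

/-- The Moore–Penrose pseudoinverse of a real matrix, characterized by the four Penrose
conditions (which determine it uniquely; it always exists for real matrices). -/
noncomputable def moorePenrose {m n : Type*} [Fintype m] [Fintype n]
    (B : Matrix m n ℝ) : Matrix n m ℝ :=
  if h : ∃ X : Matrix n m ℝ,
      B * X * B = B ∧ X * B * X = X ∧ (B * X)ᵀ = B * X ∧ (X * B)ᵀ = X * B then
    h.choose
  else 0

/-- The matrix `B = [(γ/μ)GA ; I_K]` for `q = 1`. -/
noncomputable def Bmat (K : ℕ) (W : Fin K → Fin K → ℝ) (γ μ : ℝ) :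
    Matrix ({p : Fin K × Fin K // p.1 < p.2} ⊕ Fin K) (Fin K) ℝ :=
  Matrix.of fun r c =>
    match r with
    | Sum.inl p => γ / μ * (W p.val.1 p.val.2 *
        (if c = p.val.1 then 1 else if c = p.val.2 then -1 else 0))
    | Sum.inr k => if c = k then 1 else 0

/-- The support `S_B` of `BΘ⋆`. -/
noncomputable def suppB (K : ℕ) (W : Fin K → Fin K → ℝ) (γ μ : ℝ) (Θ : Fin K → ℝ) :
    Finset ({p : Fin K × Fin K // p.1 < p.2} ⊕ Fin K) :=
  Finset.univ.filter fun r => ((Bmat K W γ μ) *ᵥ Θ) r ≠ 0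

/-- The submatrix `B_{S_B:}` of rows of `B` indexed by `S_B`. -/
noncomputable def BmatS (K : ℕ) (W : Fin K → Fin K → ℝ) (γ μ : ℝ) (Θ : Fin K → ℝ) :
    Matrix {x // x ∈ suppB K W γ μ Θ} (Fin K) ℝ :=
  (Bmat K W γ μ).submatrix Subtype.val id

/-- The sign vector `sign((BΘ⋆)_{S_B})`. -/
noncomputable def signBS (K : ℕ) (W : Fin K → Fin K → ℝ) (γ μ : ℝ) (Θ : Fin K → ℝ) :
    {x // x ∈ suppB K W γ μ Θ} → ℝ :=
  fun r => Real.sign (((Bmat K W γ μ) *ᵥ Θ) r.val)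

/-! Let `σ` be the transposition of `k` and `l`. Since `Θ⋆_k = Θ⋆_l` and all weights are equal,
`σ` permutes the rows of `B` up to sign (row `π(k',l')` goes to `±` row `π(σk',σl')`) and fixes
`Θ⋆`, so it maps the support `S_B` to itself and `B_{S_B:}` is invariant under an orthogonal
change of coordinates on both sides: a signed row permutation and the column permutation `σ`.
The four Penrose equations are preserved by such changes, so by uniqueness the pseudoinverse is
invariant too, and the sign vector transforms with the same signs. Hence
`u = B_{S_B:}^† sign((BΘ⋆)_{S_B})` satisfies `u_{σ a} = u_a`, i.e. `u_k = u_l`, and the row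
`B_{π(k,l):} = (γ/μ)(e_k - e_l)` annihilates `u`. -/

section PenroseInverse

variable {m n m' n' : Type*} [Fintype m] [Fintype n] [Fintype m'] [Fintype n']

def IsPenroseInverse (M : Matrix m n ℝ) (X : Matrix n m ℝ) : Prop :=
  M * X * M = M ∧ X * M * X = X ∧ (M * X)ᵀ = M * X ∧ (X * M)ᵀ = X * M

theorem eq_zero_of_transpose_eq_of_mul_self_eq_zero {S : Matrix n n ℝ} (hS : Sᵀ = S)
    (h : S * S = 0) : S = 0 :=
  conjTranspose_mul_self_eq_zero.mp (by rwa [conjTranspose_eq_transpose_of_trivial, hS])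

theorem IsPenroseInverse.unique {M : Matrix m n ℝ} {X Y : Matrix n m ℝ}
    (hX : IsPenroseInverse M X) (hY : IsPenroseInverse M Y) : X = Y := by
  obtain ⟨hX1, hX2, hX3, hX4⟩ := hX
  obtain ⟨hY1, hY2, hY3, hY4⟩ := hY
  have hMX : M * X = M * Y := sub_eq_zero.mp <|
    eq_zero_of_transpose_eq_of_mul_self_eq_zero (by rw [transpose_sub, hX3, hY3]) (by
      simp only [Matrix.sub_mul, Matrix.mul_sub, ← Matrix.mul_assoc, hX1, hY1]
      abel)
  have hXMY : X * M * Y = X := by rw [Matrix.mul_assoc, ← hMX, ← Matrix.mul_assoc, hX2]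
  have hYMX : Y * M * X = Y := by rw [Matrix.mul_assoc, hMX, ← Matrix.mul_assoc, hY2]
  have hXM : X * M = Y * M := sub_eq_zero.mp <|
    eq_zero_of_transpose_eq_of_mul_self_eq_zero (by rw [transpose_sub, hX4, hY4]) (by
      simp only [Matrix.sub_mul, Matrix.mul_sub, ← Matrix.mul_assoc, hX2, hY2, hXMY, hYMX]
      abel)
  rw [← hXMY, hXM, hY2]

theorem moorePenrose_def (M : Matrix m n ℝ) :
    moorePenrose M = if h : ∃ X, IsPenroseInverse M X then h.choose else 0 :=
  rfl

theorem moorePenrose_eq {M : Matrix m n ℝ} {X : Matrix n m ℝ} (hX : IsPenroseInverse M X) :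
    moorePenrose M = X := by
  have h : ∃ X, IsPenroseInverse M X := ⟨X, hX⟩
  rw [moorePenrose_def, dif_pos h]
  exact h.choose_spec.unique hX

theorem moorePenrose_eq_zero {M : Matrix m n ℝ} (h : ¬∃ X, IsPenroseInverse M X) :
    moorePenrose M = 0 := by
  rw [moorePenrose_def, dif_neg h]

theorem moorePenrose_eq_map {M : Matrix m n ℝ} {M' : Matrix m' n' ℝ}
    (f : Matrix n m ℝ → Matrix n' m' ℝ) (hf : ∀ X, IsPenroseInverse M X → IsPenroseInverse M' (f X))
    (hf' : ∀ X', IsPenroseInverse M' X' → ∃ X, IsPenroseInverse M X) (hf0 : f 0 = 0) :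
    moorePenrose M' = f (moorePenrose M) := by
  by_cases h : ∃ X, IsPenroseInverse M X
  · obtain ⟨X, hX⟩ := h
    rw [moorePenrose_eq hX, moorePenrose_eq (hf X hX)]
  · rw [moorePenrose_eq_zero h, hf0, moorePenrose_eq_zero]
    rintro ⟨X', hX'⟩
    exact h (hf' X' hX')

theorem IsPenroseInverse.submatrix {M : Matrix m n ℝ} {X : Matrix n m ℝ}
    (hX : IsPenroseInverse M X) (τ : m' ≃ m) (σ : n' ≃ n) :
    IsPenroseInverse (M.submatrix τ σ) (X.submatrix σ τ) := by
  obtain ⟨h1, h2, h3, h4⟩ := hX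
  simp only [IsPenroseInverse, submatrix_mul_equiv, transpose_submatrix, h1, h2, h3, h4,
    and_self]

theorem moorePenrose_submatrix (M : Matrix m n ℝ) (τ : m' ≃ m) (σ : n' ≃ n) :
    moorePenrose (M.submatrix τ σ) = (moorePenrose M).submatrix σ τ :=
  moorePenrose_eq_map _ (fun X hX => hX.submatrix τ σ)
    (fun X' hX' => ⟨X'.submatrix σ.symm τ.symm, by simpa using hX'.submatrix τ.symm σ.symm⟩)
    rfl

theorem IsPenroseInverse.orthogonal_mul {M : Matrix m n ℝ} {X : Matrix n m ℝ}
    (hX : IsPenroseInverse M X) {U : Matrix m' m ℝ} (hU : Uᵀ * U = 1) :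
    IsPenroseInverse (U * M) (X * Uᵀ) := by
  obtain ⟨h1, h2, h3, h4⟩ := hX
  refine ⟨?_, ?_, ?_, ?_⟩
  · simp only [Matrix.mul_assoc]
    rw [← Matrix.mul_assoc Uᵀ, hU, Matrix.one_mul, ← Matrix.mul_assoc M, h1]
  · simp only [Matrix.mul_assoc]
    rw [← Matrix.mul_assoc Uᵀ, hU, Matrix.one_mul, ← Matrix.mul_assoc X M,
      ← Matrix.mul_assoc (X * M), h2]
  · have h : U * M * (X * Uᵀ) = U * (M * X) * Uᵀ := by simp only [Matrix.mul_assoc]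
    rw [h, transpose_mul, transpose_mul, h3, transpose_transpose]
    exact (Matrix.mul_assoc _ _ _).symm
  · rw [Matrix.mul_assoc, ← Matrix.mul_assoc Uᵀ, hU, Matrix.one_mul, h4]

theorem moorePenrose_orthogonal_mul (M : Matrix m n ℝ) {U : Matrix m m ℝ}
    (hU : Uᵀ * U = 1) : moorePenrose (U * M) = moorePenrose M * Uᵀ :=
  moorePenrose_eq_map _ (fun X hX => hX.orthogonal_mul hU)
    (fun X' hX' => ⟨X' * U, by
      simpa [← Matrix.mul_assoc, hU] using
        hX'.orthogonal_mul (U := Uᵀ) (by rw [transpose_transpose, mul_eq_one_comm.mp hU])⟩)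
    (Matrix.zero_mul _)

end PenroseInverse

section SignedSymmetry

variable {m n : Type*} {τ : m ≃ m} {σ : n ≃ n} {ε : m → ℝ}

def IsSignedSymmetry (M : Matrix m n ℝ) (τ : m ≃ m) (σ : n ≃ n) (ε : m → ℝ) : Prop :=
  (∀ r, ε r * ε r = 1) ∧ ∀ r a, M (τ r) (σ a) = ε r * M r a

theorem IsSignedSymmetry.moorePenrose_mulVec_comp [Fintype m] [Fintype n] {M : Matrix m n ℝ}
    (hM : IsSignedSymmetry M τ σ ε) {s : m → ℝ} (hs : ∀ r, s (τ r) = ε r * s r) :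
    (moorePenrose M *ᵥ s) ∘ σ = moorePenrose M *ᵥ s := by
  obtain ⟨hε, hMε⟩ := hM
  have hD : (diagonal ε)ᵀ * diagonal ε = 1 := by
    rw [diagonal_transpose, diagonal_mul_diagonal, ← diagonal_one]
    exact congrArg diagonal (funext hε)
  have hMσ : M.submatrix τ σ = diagonal ε * M := by
    ext r a
    rw [submatrix_apply, diagonal_mul, hMε]
  have hXσ : (moorePenrose M).submatrix σ τ = moorePenrose M * diagonal ε := by
    rw [← moorePenrose_submatrix, hMσ, moorePenrose_orthogonal_mul _ hD, diagonal_transpose]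
  calc (moorePenrose M *ᵥ s) ∘ σ = (moorePenrose M).submatrix σ τ *ᵥ (s ∘ τ) := by
        simp [submatrix_mulVec_equiv, Function.comp_assoc]
    _ = moorePenrose M *ᵥ (diagonal ε *ᵥ (s ∘ τ)) := by rw [hXσ, mulVec_mulVec]
    _ = moorePenrose M *ᵥ s := by
        congr 1
        ext r
        rw [mulVec_diagonal, Function.comp_apply, hs, ← mul_assoc, hε, one_mul]

theorem IsSignedSymmetry.mulVec_apply [Fintype n] {B : Matrix m n ℝ}
    (hB : IsSignedSymmetry B τ σ ε) {Θ : n → ℝ} (hΘ : ∀ a, Θ (σ a) = Θ a) (r : m) :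
    (B *ᵥ Θ) (τ r) = ε r * (B *ᵥ Θ) r := by
  simp only [mulVec, dotProduct, Finset.mul_sum]
  rw [← σ.sum_comp]
  simp only [hB.2, hΘ, mul_assoc]

theorem IsSignedSymmetry.submatrix_subtype {B : Matrix m n ℝ} (hB : IsSignedSymmetry B τ σ ε)
    {S : Set m} (hS : ∀ r, r ∈ S ↔ τ r ∈ S) :
    IsSignedSymmetry (B.submatrix ((↑) : S → m) id) (τ.subtypeEquiv hS) σ (ε ∘ (↑)) :=
  ⟨fun r => hB.1 r, fun r a => hB.2 r a⟩

theorem IsSignedSymmetry.moorePenrose_support_mulVec_sign_comp [Fintype m] [Fintype n]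
    {B : Matrix m n ℝ} (hB : IsSignedSymmetry B τ σ ε) {Θ : n → ℝ} (hΘ : ∀ a, Θ (σ a) = Θ a)
    (S : Finset m) (hS : ∀ r, r ∈ S ↔ (B *ᵥ Θ) r ≠ 0) :
    (moorePenrose (B.submatrix ((↑) : S → m) id) *ᵥ fun r => Real.sign ((B *ᵥ Θ) r)) ∘ σ =
      moorePenrose (B.submatrix ((↑) : S → m) id) *ᵥ fun r => Real.sign ((B *ᵥ Θ) r) := by
  have hBΘ := hB.mulVec_apply hΘ
  have hε0 : ∀ r, ε r ≠ 0 := fun r h => by simpa [h] using hB.1 r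
  have hτS : ∀ r, r ∈ (S : Set m) ↔ τ r ∈ (S : Set m) := fun r => by simp [hS, hBΘ, hε0]
  refine (hB.submatrix_subtype hτS).moorePenrose_mulVec_comp fun r => ?_
  rcases mul_self_eq_one_iff.mp (hB.1 r) with h | h <;> simp [hBΘ, h, Real.sign_neg]

end SignedSymmetry

section IncreasingPairs

variable {α : Type*} [LinearOrder α] (σ : Equiv.Perm α)

def sortPair (p : {p : α × α // p.1 < p.2}) : {p : α × α // p.1 < p.2} :=
  if h : σ p.1.1 < σ p.1.2 then ⟨(σ p.1.1, σ p.1.2), h⟩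
  else ⟨(σ p.1.2, σ p.1.1), lt_of_le_of_ne (not_lt.mp h) (σ.injective.ne p.2.ne')⟩

theorem sortPair_inv_sortPair (p : {p : α × α // p.1 < p.2}) :
    sortPair σ⁻¹ (sortPair σ p) = p := by
  obtain ⟨⟨a, b⟩, hab⟩ := p
  by_cases h : σ a < σ b <;> simp [sortPair, h, hab, hab.not_gt]

def pairPerm : Equiv.Perm {p : α × α // p.1 < p.2} where
  toFun := sortPair σ
  invFun := sortPair σ⁻¹
  left_inv := sortPair_inv_sortPair σ
  right_inv p := by simpa using sortPair_inv_sortPair σ⁻¹ p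

def pairSign (p : {p : α × α // p.1 < p.2}) : ℝ :=
  if σ p.1.1 < σ p.1.2 then 1 else -1

theorem pairSign_mul_self (p : {p : α × α // p.1 < p.2}) : pairSign σ p * pairSign σ p = 1 := by
  unfold pairSign
  split_ifs <;> norm_num

/-- The row `A_{π(p):} = e_{p.1} - e_{p.2}` of the oriented incidence matrix `A`. -/
def incidence (p : {p : α × α // p.1 < p.2}) (a : α) : ℝ :=
  if a = p.1.1 then 1 else if a = p.1.2 then -1 else 0

theorem incidence_sortPair (p : {p : α × α // p.1 < p.2}) (a : α) :
    incidence (sortPair σ p) (σ a) = pairSign σ p * incidence p a := by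
  obtain ⟨⟨x, y⟩, hxy⟩ := p
  by_cases h : σ x < σ y
  · simp [incidence, sortPair, pairSign, h, σ.injective.eq_iff]
  · simp [incidence, sortPair, pairSign, h, σ.injective.eq_iff]
    split_ifs <;> simp_all [hxy.ne']

theorem incidence_dotProduct [Fintype α] (p : {p : α × α // p.1 < p.2}) (v : α → ℝ) :
    incidence p ⬝ᵥ v = v p.1.1 - v p.1.2 := by
  have h : incidence p = Pi.single p.1.1 1 - Pi.single p.1.2 1 := by
    ext a
    simp only [incidence, Pi.sub_apply, Pi.single_apply]
    split_ifs <;> simp_all [p.2.ne']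
  rw [h, sub_dotProduct, single_one_dotProduct, single_one_dotProduct]

end IncreasingPairs

section Bmat

variable {K : ℕ} {W : Fin K → Fin K → ℝ} {γ μ : ℝ}

theorem Bmat_inl_apply (p : {p : Fin K × Fin K // p.1 < p.2}) (c : Fin K) :
    Bmat K W γ μ (Sum.inl p) c = γ / μ * (W p.1.1 p.1.2 * incidence p c) :=
  rfl

theorem Bmat_inl_dotProduct (p : {p : Fin K × Fin K // p.1 < p.2}) (v : Fin K → ℝ) :
    Bmat K W γ μ (Sum.inl p) ⬝ᵥ v = γ / μ * W p.1.1 p.1.2 * (v p.1.1 - v p.1.2) := by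
  have h : Bmat K W γ μ (Sum.inl p) = (γ / μ * W p.1.1 p.1.2) • incidence p := by
    ext c
    rw [Bmat_inl_apply, Pi.smul_apply, smul_eq_mul, mul_assoc]
  rw [h, smul_dotProduct, incidence_dotProduct, smul_eq_mul]

theorem Bmat_isSignedSymmetry (hW : ∀ k l : Fin K, k < l → W k l = 1)
    (σ : Equiv.Perm (Fin K)) :
    IsSignedSymmetry (Bmat K W γ μ) (Equiv.sumCongr (pairPerm σ) σ) σ
      (Sum.elim (pairSign σ) 1) := by
  refine ⟨by rintro (p | k) <;> simp [pairSign_mul_self], ?_⟩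
  rintro (p | k) a
  · simp only [Equiv.sumCongr_apply, Sum.map_inl, Sum.elim_inl, Bmat_inl_apply,
      pairPerm, Equiv.coe_fn_mk, hW _ _ p.2, hW _ _ (sortPair σ p).2, incidence_sortPair]
    ring
  · simp [Bmat, σ.injective.eq_iff]

theorem moorePenrose_BmatS_mulVec_signBS_comp (hW : ∀ k l : Fin K, k < l → W k l = 1)
    (σ : Equiv.Perm (Fin K)) {Θ : Fin K → ℝ} (hΘ : ∀ a, Θ (σ a) = Θ a) :
    (moorePenrose (BmatS K W γ μ Θ) *ᵥ signBS K W γ μ Θ) ∘ σ =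
      moorePenrose (BmatS K W γ μ Θ) *ᵥ signBS K W γ μ Θ :=
  (Bmat_isSignedSymmetry hW σ).moorePenrose_support_mulVec_sign_comp hΘ (suppB K W γ μ Θ)
    fun r => by simp [suppB]

end Bmat

theorem IC_zero_on_equal_pairs_general
    (K : ℕ) (W : Fin K → Fin K → ℝ)
    (hWone : ∀ k l : Fin K, k < l → W k l = 1)
    (μ γ : ℝ)
    (Θ : Fin K → ℝ) :
    ∀ p : {p : Fin K × Fin K // p.1 < p.2}, Θ p.val.1 = Θ p.val.2 →
      (Bmat K W γ μ (Sum.inl p)) ᵥ* (moorePenrose (BmatS K W γ μ Θ)) ⬝ᵥ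
        signBS K W γ μ Θ = 0 := by
  intro p hp
  have hu := moorePenrose_BmatS_mulVec_signBS_comp (γ := γ) (μ := μ) (Θ := Θ) hWone
    (Equiv.swap p.1.1 p.1.2) fun a => by
      rw [Equiv.swap_apply_def]
      split_ifs <;> simp_all
  have hkl := congrFun hu p.1.2
  rw [Function.comp_apply, Equiv.swap_apply_right] at hkl
  rw [← dotProduct_mulVec, Bmat_inl_dotProduct, hkl, sub_self, mul_zero]

/-- with all weights equal to 1 and `γ, μ > 0`, for every row `r = π(k,l)` of
`B` with `Θ⋆_k = Θ⋆_l` (a row of `S_B^c` corresponding to a zero difference), we have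
`B_{r:} B_{S_B:}† sign((BΘ⋆)_{S_B}) = 0`. -/
theorem IC_zero_on_equal_pairs
    (K : ℕ) (W : Fin K → Fin K → ℝ)
    (hWone : ∀ k l : Fin K, k < l → W k l = 1)
    (μ γ : ℝ) (hμ : 0 < μ) (hγ : 0 < γ)
    (Θ : Fin K → ℝ) (hΘ : ∃ k, Θ k ≠ 0) :
    ∀ p : {p : Fin K × Fin K // p.1 < p.2}, Θ p.val.1 = Θ p.val.2 →
      (Bmat K W γ μ (Sum.inl p)) ᵥ* (moorePenrose (BmatS K W γ μ Θ)) ⬝ᵥ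
        signBS K W γ μ Θ = 0 :=
  IC_zero_on_equal_pairs_general K W hWone μ γ Θ
end

section
/- Suppose all weights are equal to 1 (W_{kl} = 1 for all l > k) and γ, μ > 0. Fix (i,j), let Θ⋆_ij ∈ ℝ^K have at least one nonzero entry, and let F be the adjugate matrix of B_{S_B:}ᵀ B_{S_B:}. Then for every pair of indices k ≠ l with Θ⋆_{k;ij} = Θ⋆_{l;ij} ≠ 0, letting S̄ = {r ∈ {1,…,K} : Θ⋆_{r;ij} ≠ Θ⋆_{k;ij}}, we have F_{kk} − F_{kl} = det(B_{S_B:}ᵀ B_{S_B:}) / (|S̄|·γ²/μ² + 1). -/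
/-
With unit weights, `B_{S_B:}ᵀ B_{S_B:} = (γ/μ)² L + D`: the rows of `GA` that survive in `S_B`
are the incidence vectors `e_x - e_y` of the pairs with `Θ⋆_x ≠ Θ⋆_y`, so they assemble into the
Laplacian `L` of the graph joining indices with different values of `Θ⋆`, while the rows of `I_K`
in `S_B` give the projection `D` onto the support of `Θ⋆`. A vector supported on one nonzero level
set of `Θ⋆` with zero sum is fixed by `D` and is an eigenvector of `L` whose eigenvalue is the
number of indices off that level set. Hence `e_k - e_l` is an eigenvector of `N = B_{S_B:}ᵀB_{S_B:}`
with eigenvalue `λ = |S̄| γ²/μ² + 1 > 0`, and reading `adj(N) N = det(N) I` on it at coordinate `k`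
gives `λ (F_kk - F_kl) = det N`.
-/

open scoped Classical
open Matrix

theorem Matrix.smul_adjugate_mulVec_of_mulVec_eq_smul {n R : Type*} [Fintype n] [DecidableEq n]
    [CommRing R] {M : Matrix n n R} {v : n → R} {c : R} (h : M *ᵥ v = c • v) :
    c • (adjugate M *ᵥ v) = M.det • v := by
  rw [← mulVec_smul, ← h, mulVec_mulVec, adjugate_mul, smul_mulVec, one_mulVec]

theorem Matrix.transpose_mul_self_mulVec {m n R : Type*} [Fintype m] [Fintype n] [CommSemiring R]
    (A : Matrix m n R) (u : n → R) : (Aᵀ * A) *ᵥ u = ∑ r, (A r ⬝ᵥ u) • A r := by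
  rw [← mulVec_mulVec]
  ext a
  simp [mulVec, dotProduct, Finset.sum_apply, mul_comm]

namespace SimpleGraph

variable {ι R : Type*} [Fintype ι] [LinearOrder ι] [CommRing R]

theorem lapMatrix_mulVec_eq_sum_lt (G : SimpleGraph ι) [DecidableRel G.Adj] (u : ι → R) :
    G.lapMatrix R *ᵥ u = ∑ p : {p : ι × ι // p.1 < p.2}, if G.Adj p.1.1 p.1.2 then
      (u p.1.1 - u p.1.2) • (Pi.single p.1.1 1 - Pi.single p.1.2 1 : ι → R) else 0 := by
  ext a
  set g : ι → R := fun y => if G.Adj a y then u a - u y else 0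
  -- the edge `{x, y}` reaches coordinate `a` only through an endpoint equal to `a`
  have hedge : ∀ x y, (if G.Adj x y then
      (u x - u y) * ((Pi.single x 1 - Pi.single y 1 : ι → R) a) else 0) =
      (if x = a then g y else 0) + (if y = a then g x else 0) := by
    intro x y
    by_cases hx : x = a <;> by_cases hy : y = a
    · subst hx hy; simp [g]
    · subst hx; simp [g, Ne.symm hy]
    · subst hy; simp [g, Ne.symm hx, G.adj_comm]
    · simp [Ne.symm hx, Ne.symm hy, hx, hy]
  have hlap : (G.lapMatrix R *ᵥ u) a = ∑ y, g y := by
    rw [lapMatrix_mulVec_apply, ← card_neighborFinset_eq_degree, neighborFinset_eq_filter,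
      ← Finset.sum_filter, Finset.sum_sub_distrib, Finset.sum_const, nsmul_eq_mul]
  rw [hlap]
  calc ∑ y, g y = ∑ y, ((if a < y then g y else 0) + (if y < a then g y else 0)) := by
        refine Finset.sum_congr rfl fun y _ => ?_
        rcases lt_trichotomy a y with h | rfl | h
        · simp [h, h.not_gt]
        · simp [g]
        · simp [h, h.not_gt]
    _ = ∑ x, ∑ y, if x < y then (if x = a then g y else 0) + (if y = a then g x else 0) else 0 := by
        simp_rw [ite_add_zero, Finset.sum_add_distrib, ← ite_and, and_comm (a := _ < _), ite_and,
          Finset.sum_ite_irrel, Finset.sum_const_zero, Finset.sum_ite_eq', Finset.mem_univ, if_true]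
    _ = ∑ p ∈ Finset.univ.filter (fun p : ι × ι => p.1 < p.2),
          ((if p.1 = a then g p.2 else 0) + (if p.2 = a then g p.1 else 0)) := by
        rw [Finset.sum_filter, Fintype.sum_prod_type]
    _ = _ := by
        rw [Finset.sum_subtype _ (p := fun p : ι × ι => p.1 < p.2) (by simp), Finset.sum_apply]
        refine Finset.sum_congr rfl fun p _ => ?_
        rw [← hedge]
        split_ifs <;> rfl

theorem lapMatrix_comap_top_mulVec_eq_smul {α : Type*} (Θ : ι → α) {t : α} {v : ι → R}
    (hv : ∀ y, Θ y ≠ t → v y = 0) (hsum : ∑ y, v y = 0) :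
    ((⊤ : SimpleGraph α).comap Θ).lapMatrix R *ᵥ v = (Finset.card {y | Θ y ≠ t} : R) • v := by
  ext a
  rw [lapMatrix_mulVec_apply, Pi.smul_apply, smul_eq_mul, neighborFinset_eq_filter,
    ← card_neighborFinset_eq_degree, neighborFinset_eq_filter]
  simp only [comap_adj, top_adj]
  by_cases ha : Θ a = t
  · have hoff : ∑ y ∈ {y | Θ a ≠ Θ y}, v y = 0 :=
      Finset.sum_eq_zero fun y hy => hv y (by simp_all [eq_comm])
    simp_rw [hoff, ha, ne_comm (a := t), sub_zero]
  · have hall : ∑ y ∈ {y | Θ a ≠ Θ y}, v y = ∑ y, v y :=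
      Finset.sum_subset (Finset.subset_univ _) fun y _ hy => hv y (by simp_all)
    rw [hall, hsum, hv a ha]
    simp

end SimpleGraph

section Bmat

variable {K : ℕ} {W : Fin K → Fin K → ℝ} {γ μ : ℝ}

theorem Bmat_inl {p : {p : Fin K × Fin K // p.1 < p.2}} (hW : W p.1.1 p.1.2 = 1) :
    Bmat K W γ μ (Sum.inl p) = (γ / μ) • (Pi.single p.1.1 1 - Pi.single p.1.2 1) := by
  ext c
  have hne : p.1.1 ≠ p.1.2 := p.2.ne
  by_cases h1 : c = p.1.1 <;> by_cases h2 : c = p.1.2 <;> simp_all [Bmat]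

theorem Bmat_inr (m : Fin K) : Bmat K W γ μ (Sum.inr m) = Pi.single m 1 := by
  ext c
  simp [Bmat, Pi.single_apply]

theorem BmatS_transpose_mul_self (hW : ∀ k l, k < l → W k l = 1) (Θ : Fin K → ℝ) :
    (BmatS K W γ μ Θ)ᵀ * BmatS K W γ μ Θ = (γ / μ) ^ 2 • ((⊤ : SimpleGraph ℝ).comap Θ).lapMatrix ℝ
      + diagonal fun m => if Θ m ≠ 0 then 1 else 0 := by
  refine Matrix.ext_iff_mulVec.mpr fun u => ?_
  rw [transpose_mul_self_mulVec]
  refine (Finset.sum_coe_sort (suppB K W γ μ Θ)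
    fun r => (Bmat K W γ μ r ⬝ᵥ u) • Bmat K W γ μ r).trans ?_
  rw [suppB, Finset.sum_filter, Fintype.sum_sum_type,
    add_mulVec, smul_mulVec, SimpleGraph.lapMatrix_mulVec_eq_sum_lt, Finset.smul_sum]
  have hrow : ∀ r, (Bmat K W γ μ *ᵥ Θ) r = Bmat K W γ μ r ⬝ᵥ Θ := fun _ => rfl
  simp only [hrow, Bmat_inr, single_one_dotProduct]
  congr 1
  · refine Finset.sum_congr rfl fun p _ => ?_
    rw [Bmat_inl (hW _ _ p.2)]
    by_cases hc : γ / μ = 0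
    · simp [hc]
    · simp [hc, sub_eq_zero, smul_smul]
      ring_nf
  · ext a
    rw [Finset.sum_apply, mulVec_diagonal,
      Finset.sum_eq_single a (fun b _ hb => by split_ifs <;> simp [Ne.symm hb]) (by simp)]
    split_ifs <;> simp

theorem BmatS_transpose_mul_self_mulVec_eq_smul (hW : ∀ k l, k < l → W k l = 1)
    {Θ v : Fin K → ℝ} {t : ℝ} (ht : t ≠ 0)
    (hv : ∀ y, Θ y ≠ t → v y = 0) (hsum : ∑ y, v y = 0) :
    ((BmatS K W γ μ Θ)ᵀ * BmatS K W γ μ Θ) *ᵥ v =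
      ((Finset.card {y | Θ y ≠ t} : ℝ) * (γ ^ 2 / μ ^ 2) + 1) • v := by
  rw [BmatS_transpose_mul_self hW, add_mulVec, smul_mulVec,
    SimpleGraph.lapMatrix_comap_top_mulVec_eq_smul Θ hv hsum, smul_smul, add_smul, one_smul,
    div_pow, mul_comm]
  congr 1
  ext a
  rw [mulVec_diagonal]
  by_cases ha : Θ a = t
  · simp [ha, ht]
  · simp [hv a ha]

end Bmat

theorem adjugate_diagonal_difference_general
    (K : ℕ) (W : Fin K → Fin K → ℝ)
    (hWone : ∀ k' l' : Fin K, k' < l' → W k' l' = 1)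
    (μ γ : ℝ)
    (Θ : Fin K → ℝ) :
    ∀ k l : Fin K, k ≠ l → Θ k = Θ l → Θ k ≠ 0 →
      (Matrix.adjugate ((BmatS K W γ μ Θ)ᵀ * BmatS K W γ μ Θ)) k k -
        (Matrix.adjugate ((BmatS K W γ μ Θ)ᵀ * BmatS K W γ μ Θ)) k l =
      ((BmatS K W γ μ Θ)ᵀ * BmatS K W γ μ Θ).det /
        (((Finset.univ.filter (fun r => Θ r ≠ Θ k)).card : ℝ) * (γ ^ 2 / μ ^ 2) + 1) := by
  intro k l hkl hΘkl hΘk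
  set v : Fin K → ℝ := Pi.single k 1 - Pi.single l 1
  have hv : ∀ y, Θ y ≠ Θ k → v y = 0 := fun y hy => by
    have hyk : y ≠ k := fun h => hy (h ▸ rfl)
    have hyl : y ≠ l := fun h => hy (h ▸ hΘkl.symm)
    simp [v, hyk, hyl]
  have hsum : ∑ y, v y = 0 := by simp [v]
  have hM := BmatS_transpose_mul_self_mulVec_eq_smul (γ := γ) (μ := μ) hWone hΘk hv hsum
  have hk := congrFun (smul_adjugate_mulVec_of_mulVec_eq_smul hM) k
  simp only [v, mulVec_sub, mulVec_single_one, Pi.smul_apply, Pi.sub_apply, smul_eq_mul] at hk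
  rw [eq_div_iff (by positivity)]
  simpa [hkl, mul_comm] using hk

/-- with all weights equal to 1 and `γ, μ > 0`, let `F` be the adjugate of
`B_{S_B:}ᵀB_{S_B:}`. For every `k ≠ l` with `Θ⋆_k = Θ⋆_l ≠ 0`, letting
`S̄ = {r : Θ⋆_r ≠ Θ⋆_k}`, we have
`F_{kk} − F_{kl} = det(B_{S_B:}ᵀB_{S_B:}) / (|S̄|·γ²/μ² + 1)`. -/
theorem adjugate_diagonal_difference
    (K : ℕ) (W : Fin K → Fin K → ℝ)
    (hWone : ∀ k' l' : Fin K, k' < l' → W k' l' = 1)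
    (μ γ : ℝ) (hμ : 0 < μ) (hγ : 0 < γ)
    (Θ : Fin K → ℝ) (hΘ : ∃ k, Θ k ≠ 0) :
    ∀ k l : Fin K, k ≠ l → Θ k = Θ l → Θ k ≠ 0 →
      (Matrix.adjugate ((BmatS K W γ μ Θ)ᵀ * BmatS K W γ μ Θ)) k k -
        (Matrix.adjugate ((BmatS K W γ μ Θ)ᵀ * BmatS K W γ μ Θ)) k l =
      ((BmatS K W γ μ Θ)ᵀ * BmatS K W γ μ Θ).det /
        (((Finset.univ.filter (fun r => Θ r ≠ Θ k)).card : ℝ) * (γ ^ 2 / μ ^ 2) + 1) :=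
  adjugate_diagonal_difference_general K W hWone μ γ Θ
end

section
/- Let M = I_K + γAᵀGᵀGA with q = 2 and γ ≥ 0, and let C be any matrix with CᵀC = M. Then for every nonempty subset S ⊆ {1,…,K}, the principal submatrix C_Sᵀ C_S = M_{SS} is invertible and its inverse satisfies the induced ∞-norm bound ‖(C_Sᵀ C_S)⁻¹‖_∞ ≤ 1 / min_{i∈S}{ 1 + γ·Σ_{j∈S^c, j≠i} W_{ij} } ≤ 1. -/
open scoped Classical
open Matrix

/-- The pair-difference matrix `A`. -/
noncomputable def pairDiffMatrix (K : ℕ) :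
    Matrix {p : Fin K × Fin K // p.1 < p.2} (Fin K) ℝ :=
  Matrix.of fun p m => if m = p.val.1 then 1 else if m = p.val.2 then -1 else 0

/-- The diagonal weight matrix `G` for `q = 2`, with diagonal entries `√(W_{kl})`. -/
noncomputable def weightDiagSqrt (K : ℕ) (W : Fin K → Fin K → ℝ) :
    Matrix {p : Fin K × Fin K // p.1 < p.2} {p : Fin K × Fin K // p.1 < p.2} ℝ :=
  Matrix.diagonal fun p => Real.sqrt (W p.val.1 p.val.2)

/-!
The matrix `AᵀGᵀGA` is the weighted graph Laplacian `L = diag(Σⱼ W_kj) − W`, so `C_SᵀC_S` is the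
principal submatrix `M_SS` of `M = I + γL`. Row `i ∈ S` of `M_SS` exceeds the sum of the absolute
values of its off-diagonal entries by `1 + γ Σ_{j ∉ S} W_ij`, which is at least the infimum `d ≥ 1`.
For a matrix `B` that is diagonally dominant with margin `d > 0` (Varah's bound), evaluating
`B y` at a coordinate `i` where `|yᵢ|` is maximal gives `d |yᵢ| ≤ |(B y)ᵢ|`; taking
`y = B⁻¹ z` with `z` the sign vector of row `s` of `B⁻¹` bounds that row's absolute sum by `1 / d`.
-/

open Finset

namespace Matrix

theorem sum_abs_apply_le_of_forall_abs_mulVec_apply_le {m n : Type*} [Fintype m]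
    (N : Matrix n m ℝ) (s : n)
    {c : ℝ} (h : ∀ z : m → ℝ, (∀ j, |z j| ≤ 1) → |(N *ᵥ z) s| ≤ c) :
    ∑ t, |N s t| ≤ c := by
  set z : m → ℝ := fun t => SignType.sign (N s t)
  have hz : ∀ j, |z j| ≤ 1 := fun j => by
    rcases lt_trichotomy (N s j) 0 with h | h | h <;> simp [z, h]
  calc ∑ t, |N s t| = (N *ᵥ z) s := by simp only [mulVec, dotProduct, z, self_mul_sign]
    _ ≤ |(N *ᵥ z) s| := le_abs_self _
    _ ≤ c := h z hz

section DiagDominant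

variable {n : Type*} [Fintype n] [DecidableEq n]

def IsDiagDominantBy (B : Matrix n n ℝ) (d : ℝ) : Prop :=
  ∀ i, ∑ j ∈ univ.erase i, |B i j| + d ≤ B i i

theorem IsDiagDominantBy.det_ne_zero {B : Matrix n n ℝ} {d : ℝ} (hB : B.IsDiagDominantBy d)
    (hd : 0 < d) : B.det ≠ 0 :=
  det_ne_zero_of_sum_row_lt_diag fun i => by
    simp only [Real.norm_eq_abs]
    linarith [hB i, le_abs_self (B i i)]

theorem IsDiagDominantBy.mul_abs_le_abs_mulVec_apply {B : Matrix n n ℝ} {d : ℝ}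
    (hB : B.IsDiagDominantBy d) {y : n → ℝ} {i : n} (hmax : ∀ j, |y j| ≤ |y i|) :
    d * |y i| ≤ |(B *ᵥ y) i| := by
  have hsplit : (B *ᵥ y) i = B i i * y i + ∑ j ∈ univ.erase i, B i j * y j :=
    (add_sum_erase _ _ (mem_univ i)).symm
  have hoff : |∑ j ∈ univ.erase i, B i j * y j| ≤ (∑ j ∈ univ.erase i, |B i j|) * |y i| :=
    calc |∑ j ∈ univ.erase i, B i j * y j|
        ≤ ∑ j ∈ univ.erase i, |B i j| * |y j| := by
          simpa only [abs_mul] using abs_sum_le_sum_abs (fun j => B i j * y j) (univ.erase i)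
      _ ≤ (∑ j ∈ univ.erase i, |B i j|) * |y i| := by
          rw [sum_mul]
          exact sum_le_sum fun j _ => mul_le_mul_of_nonneg_left (hmax j) (abs_nonneg _)
  calc d * |y i| ≤ (B i i - ∑ j ∈ univ.erase i, |B i j|) * |y i| :=
        mul_le_mul_of_nonneg_right (by linarith [hB i]) (abs_nonneg _)
    _ ≤ |B i i * y i| - |∑ j ∈ univ.erase i, B i j * y j| := by
        rw [sub_mul, abs_mul]
        exact sub_le_sub (mul_le_mul_of_nonneg_right (le_abs_self _) (abs_nonneg _)) hoff
    _ ≤ |(B *ᵥ y) i| := hsplit ▸ abs_sub_abs_le_abs_add _ _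

theorem IsDiagDominantBy.sum_abs_inv_apply_le {B : Matrix n n ℝ} {d : ℝ}
    (hB : B.IsDiagDominantBy d) (hd : 0 < d) (s : n) : ∑ t, |B⁻¹ s t| ≤ 1 / d := by
  have : Nonempty n := ⟨s⟩
  refine sum_abs_apply_le_of_forall_abs_mulVec_apply_le _ s fun z hz => ?_
  set y := B⁻¹ *ᵥ z
  have hBy : B *ᵥ y = z := by
    rw [mulVec_mulVec, mul_nonsing_inv _ (hB.det_ne_zero hd).isUnit, one_mulVec]
  obtain ⟨i, hi⟩ := Finite.exists_max fun j => |y j|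
  have hyi : d * |y i| ≤ 1 := by
    have := hB.mul_abs_le_abs_mulVec_apply hi
    rw [hBy] at this
    exact this.trans (hz i)
  calc |y s| ≤ |y i| := hi s
    _ ≤ 1 / d := by rwa [le_div_iff₀ hd, mul_comm]

end DiagDominant

theorem transpose_submatrix_id_mul_self {l m n R : Type*} [Fintype m]
    [NonUnitalNonAssocSemiring R] (C : Matrix m n R) (f : l → n) :
    (C.submatrix id f)ᵀ * C.submatrix id f = (Cᵀ * C).submatrix f f := by
  rw [transpose_submatrix, submatrix_mul _ _ _ _ _ Function.bijective_id]

end Matrix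

theorem Finset.sum_sum_eq_two_nsmul_sum_lt {ι M : Type*} [Fintype ι] [LinearOrder ι]
    [AddCommMonoid M] (f : ι → ι → M) (hsymm : ∀ i j, f i j = f j i) (hdiag : ∀ i, f i i = 0) :
    ∑ i, ∑ j, f i j = 2 • ∑ p : {p : ι × ι // p.1 < p.2}, f p.1.1 p.1.2 := by
  have hsplit : ∀ i j, f i j = (if i < j then f i j else 0) + (if j < i then f j i else 0) := by
    intro i j
    rcases lt_trichotomy i j with h | rfl | h
    · simp [h, h.not_gt]
    · simp [hdiag]
    · simp [h, h.not_gt, hsymm i j]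
  have hlt : ∑ i, ∑ j, (if i < j then f i j else 0) =
      ∑ p : {p : ι × ι // p.1 < p.2}, f p.1.1 p.1.2 := by
    rw [← Fintype.sum_prod_type', ← sum_filter,
      sum_subtype (p := fun p : ι × ι => p.1 < p.2) _ (by simp) fun p => f p.1 p.2]
  calc ∑ i, ∑ j, f i j
      = ∑ i, ∑ j, ((if i < j then f i j else 0) + (if j < i then f j i else 0)) :=
        sum_congr rfl fun i _ => sum_congr rfl fun j _ => hsplit i j
    _ = 2 • ∑ p : {p : ι × ι // p.1 < p.2}, f p.1.1 p.1.2 := by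
        simp only [sum_add_distrib]
        rw [sum_comm (f := fun i j => if j < i then f j i else 0), hlt, two_nsmul]

def weightedLaplacian {ι R : Type*} [Fintype ι] [DecidableEq ι] [AddCommGroup R]
    (W : Matrix ι ι R) : Matrix ι ι R :=
  diagonal (fun i => ∑ j, W i j) - W

section WeightedLaplacian

variable {ι R : Type*} [Fintype ι] [DecidableEq ι] [AddCommGroup R] (W : Matrix ι ι R)

theorem weightedLaplacian_apply (i j : ι) :
    weightedLaplacian W i j = (if i = j then ∑ k, W i k else 0) - W i j := by
  rw [weightedLaplacian, Matrix.sub_apply, diagonal_apply]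

theorem weightedLaplacian_apply_self (i : ι) :
    weightedLaplacian W i i = ∑ k, W i k - W i i := by
  rw [weightedLaplacian_apply, if_pos rfl]

theorem weightedLaplacian_apply_of_ne {i j : ι} (h : i ≠ j) :
    weightedLaplacian W i j = -W i j := by
  rw [weightedLaplacian_apply, if_neg h, zero_sub]

end WeightedLaplacian

theorem weightDiagSqrt_transpose_mul_self (K : ℕ) (W : Fin K → Fin K → ℝ)
    (hWpos : ∀ k l, 0 ≤ W k l) :
    (weightDiagSqrt K W)ᵀ * weightDiagSqrt K W = diagonal fun p => W p.1.1 p.1.2 := by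
  simp [weightDiagSqrt, diagonal_mul_diagonal, Real.mul_self_sqrt (hWpos _ _)]

theorem pairDiffMatrix_apply (K : ℕ) (p : {p : Fin K × Fin K // p.1 < p.2}) (k : Fin K) :
    pairDiffMatrix K p k = (if k = p.1.1 then 1 else 0) - (if k = p.1.2 then 1 else 0) := by
  have hne := p.2.ne
  simp only [pairDiffMatrix, of_apply]
  split_ifs <;> simp_all

theorem pairDiffMatrix_gram_eq_weightedLaplacian (K : ℕ) (W : Fin K → Fin K → ℝ)
    (hWsymm : ∀ k l, W k l = W l k) (hWpos : ∀ k l, 0 ≤ W k l) :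
    (pairDiffMatrix K)ᵀ * (weightDiagSqrt K W)ᵀ * weightDiagSqrt K W * pairDiffMatrix K =
      weightedLaplacian (of W) := by
  ext k l
  -- `f i j` is the contribution of the pair `{i, j}` to the entry `(k, l)`; it is symmetric with
  -- zero diagonal, so the sum over the pairs `i < j` is half of the full double sum.
  set f : Fin K → Fin K → ℝ := fun i j =>
    W i j * ((if k = i then 1 else 0) - (if k = j then 1 else 0)) *
      ((if l = i then 1 else 0) - (if l = j then 1 else 0)) with hf
  have hexpand : ∑ i, ∑ j, f i j = 2 * weightedLaplacian (of W) k l := by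
    simp only [hf, mul_sub, mul_ite, mul_one, mul_zero, sum_sub_distrib, sum_ite_irrel,
      sum_const_zero, sum_ite_eq, mem_univ, ↓reduceIte, hWsymm l k, weightedLaplacian_apply,
      of_apply]
    split_ifs with h
    · subst h
      simp only [hWsymm _ k]
      ring
    · ring
  have hpairs := sum_sum_eq_two_nsmul_sum_lt f
    (fun i j => by simp only [hf, hWsymm i j]; ring) (fun i => by simp [hf])
  rw [Matrix.mul_assoc (pairDiffMatrix K)ᵀ, weightDiagSqrt_transpose_mul_self K W hWpos]
  rw [two_nsmul, ← two_mul, hexpand] at hpairs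
  rw [mul_apply, mul_left_cancel₀ two_ne_zero hpairs]
  refine sum_congr rfl fun p _ => ?_
  simp only [mul_diagonal, transpose_apply, pairDiffMatrix_apply, hf]
  ring

theorem isDiagDominantBy_submatrix_one_add_smul_weightedLaplacian {ι : Type*} [Fintype ι]
    [DecidableEq ι] {W : Matrix ι ι ℝ} (hW : ∀ i j, 0 ≤ W i j) {γ : ℝ} (hγ : 0 ≤ γ)
    (S : Finset ι) {d : ℝ} (hd : ∀ i ∈ S, d ≤ 1 + γ * ∑ j ∈ Sᶜ, W i j) :
    ((1 + γ • weightedLaplacian W).submatrix ((↑) : S → ι) (↑)).IsDiagDominantBy d := by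
  intro s
  have hoff : ∀ t ∈ univ.erase s,
      |(1 + γ • weightedLaplacian W).submatrix ((↑) : S → ι) (↑) s t| = γ * W s t := by
    intro t ht
    have hst : (s : ι) ≠ t := Subtype.coe_ne_coe.mpr (ne_of_mem_erase ht).symm
    simp [weightedLaplacian_apply_of_ne _ hst, one_apply_ne hst,
      abs_of_nonneg (mul_nonneg hγ (hW _ _))]
  have hrow : ∑ t ∈ univ.erase s, γ * W s t = γ * (∑ j ∈ S, W s j - W s s) := by
    rw [sum_erase_eq_sub (mem_univ s), ← mul_sum, sum_coe_sort S (fun j => W s j), mul_sub]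
  rw [sum_congr rfl hoff, hrow]
  simp only [submatrix_apply, Matrix.add_apply, one_apply_eq, Matrix.smul_apply, smul_eq_mul,
    weightedLaplacian_apply_self]
  rw [← sum_add_sum_compl S (W s)]
  linarith [hd s s.2]

/-- for `M = I + γAᵀGᵀGA` (q = 2, γ ≥ 0) and any `C` with `CᵀC = M`,
every nonempty principal submatrix `C_Sᵀ C_S = M_{SS}` is invertible and its inverse
satisfies `‖(C_SᵀC_S)⁻¹‖_∞ ≤ 1 / min_{i∈S}(1 + γ Σ_{j∈Sᶜ, j≠i} W_{ij}) ≤ 1`. -/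
theorem inverse_infty_norm_bound
    (K : ℕ) (W : Fin K → Fin K → ℝ)
    (hWsymm : ∀ k l, W k l = W l k) (hWpos : ∀ k l, 0 ≤ W k l)
    (γ : ℝ) (hγ0 : 0 ≤ γ)
    (m : Type) [Fintype m]
    (C : Matrix m (Fin K) ℝ)
    (hC : Cᵀ * C =
      1 + γ • ((pairDiffMatrix K)ᵀ * (weightDiagSqrt K W)ᵀ * (weightDiagSqrt K W) *
        (pairDiffMatrix K)))
    (S : Finset (Fin K)) (hS : S.Nonempty) :
    IsUnit ((C.submatrix id (Subtype.val : {x // x ∈ S} → Fin K))ᵀ *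
        (C.submatrix id (Subtype.val : {x // x ∈ S} → Fin K))).det ∧
    (∀ s : {x // x ∈ S},
      ∑ t : {x // x ∈ S},
        |(((C.submatrix id (Subtype.val : {x // x ∈ S} → Fin K))ᵀ *
            (C.submatrix id (Subtype.val : {x // x ∈ S} → Fin K)))⁻¹) s t| ≤
        1 / (⨅ i : {x // x ∈ S}, (1 + γ * ∑ j ∈ Sᶜ.erase i.val, W i.val j))) ∧
    1 / (⨅ i : {x // x ∈ S}, (1 + γ * ∑ j ∈ Sᶜ.erase i.val, W i.val j)) ≤ 1 := by
  have : Nonempty S := hS.to_subtype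
  set d := ⨅ i : {x // x ∈ S}, (1 + γ * ∑ j ∈ Sᶜ.erase i.val, W i.val j)
  have hmargin (i : S) : ∑ j ∈ Sᶜ.erase i, W i j = ∑ j ∈ Sᶜ, W i j := by
    rw [erase_eq_of_notMem (by simp)]
  have hd1 : 1 ≤ d :=
    le_ciInf fun i => le_add_of_nonneg_right (mul_nonneg hγ0 (sum_nonneg fun j _ => hWpos _ _))
  have hd0 : 0 < d := one_pos.trans_le hd1
  have hdom := isDiagDominantBy_submatrix_one_add_smul_weightedLaplacian (W := of W)
    (fun i j => hWpos i j) hγ0 S (d := d) fun i hi =>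
      hmargin ⟨i, hi⟩ ▸ ciInf_le (Finite.bddBelow_range _) (⟨i, hi⟩ : S)
  rw [transpose_submatrix_id_mul_self, hC,
    pairDiffMatrix_gram_eq_weightedLaplacian K W hWsymm hWpos]
  exact ⟨(hdom.det_ne_zero hd0).isUnit, hdom.sum_abs_inv_apply_le hd0, by rwa [div_le_one hd0]⟩
end
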